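/- Let a, q ∈ ℂ satisfy |a| < 1 and |q - 1/2| < 1/10. Then for every z ∈ ℂ with z q^j ≠ 1 for all integers j ≥ 0, the Mittag-Leffler expansion (az;q)_∞/(z;q)_∞ = 1 + (1/(q;q)_∞) · ∑_{j=0}^∞ ( (a q^{-j};q)_∞ / (q^{-j};q)_j ) · (z q^j / (1 - z q^j)) holds, the series being absolutely convergent. -/

import Mathlib

/-!
For coefficients with `c (j + 1) * (q ^ (j + 1) - 1) = c j * (q ^ (j + 1) - a)` and
`∑ ‖c j‖ < ∞`, the partial-fraction series `P z = ∑ c j / (1 - z q^j)` satisfies the same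
q-difference equation `(1 - z) P z = (1 - a z) P (q z)` as `(az;q)_∞ / (z;q)_∞`. Iterating it and
letting `q^N z → 0` gives `(z;q)_∞ P z = (az;q)_∞ P 0`. Letting `z → 1`, where the factor `1 - z` of
`(z;q)_∞` cancels the pole of the `j = 0` term and kills all other terms, gives
`(a;q)_∞ ∑ c j = (q;q)_∞ c 0`. The Mittag-Leffler coefficients obey the recurrence with
`c 0 = (a;q)_∞ ≠ 0`, so `∑ c j = (q;q)_∞`, and the expansion is `P z / (q;q)_∞` rewritten with
`z q^j / (1 - z q^j) = 1 / (1 - z q^j) - 1`.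
-/

open Complex Filter Topology

noncomputable section

/-- finite q-Pochhammer symbol `(x;q)_n` -/
def qPF (x q : ℂ) (n : ℕ) : ℂ := ∏ i ∈ Finset.range n, (1 - x * q ^ i)

/-- infinite q-Pochhammer symbol `(x;q)_∞` -/
def qPI (x q : ℂ) : ℂ := ∏' i : ℕ, (1 - x * q ^ i)

lemma qPF_succ (x q : ℂ) (n : ℕ) : qPF x q (n + 1) = qPF x q n * (1 - x * q ^ n) :=
  Finset.prod_range_succ _ _

section qPochhammer

variable {q : ℂ}

lemma norm_mul_pow_le (hq : ‖q‖ ≤ 1) (x : ℂ) (j : ℕ) : ‖x * q ^ j‖ ≤ ‖x‖ := by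
  rw [norm_mul, norm_pow]
  exact mul_le_of_le_one_right (norm_nonneg x) (pow_le_one₀ (norm_nonneg q) hq)

lemma pow_succ_ne_one (hq : ‖q‖ < 1) (j : ℕ) : q ^ (j + 1) ≠ 1 := fun h => by
  simpa [← norm_pow, h] using pow_lt_one₀ (norm_nonneg q) hq (Nat.succ_ne_zero j)

lemma tendsto_mul_pow_nhds_zero (hq : ‖q‖ < 1) (z : ℂ) :
    Tendsto (fun j : ℕ => z * q ^ j) atTop (𝓝 0) := by
  simpa using (tendsto_pow_atTop_nhds_zero_of_norm_lt_one hq).const_mul z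

lemma summable_norm_mul_pow (hq : ‖q‖ < 1) (x : ℂ) : Summable (fun i : ℕ => ‖x * q ^ i‖) := by
  simpa only [norm_mul, norm_pow] using
    (summable_geometric_of_lt_one (norm_nonneg q) hq).mul_left ‖x‖

lemma hasProd_qPI (hq : ‖q‖ < 1) (x : ℂ) : HasProd (fun i : ℕ => 1 - x * q ^ i) (qPI x q) := by
  simp only [sub_eq_add_neg]
  exact (Complex.multipliable_one_add_of_summable
    (summable_norm_mul_pow hq x).of_norm.neg).hasProd

lemma tendsto_qPF (hq : ‖q‖ < 1) (x : ℂ) : Tendsto (qPF x q) atTop (𝓝 (qPI x q)) :=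
  (hasProd_qPI hq x).tendsto_prod_nat

lemma qPI_eq_one_sub_mul (hq : ‖q‖ < 1) (x : ℂ) : qPI x q = (1 - x) * qPI (x * q) q := by
  have hmul : Multipliable (fun i : ℕ => 1 - x * q ^ (i + 1)) := by
    simpa only [pow_succ, mul_assoc, mul_comm q] using (hasProd_qPI hq (x * q)).multipliable
  rw [qPI, qPI, tprod_eq_zero_mul' (f := fun i : ℕ => 1 - x * q ^ i) hmul, pow_zero, mul_one]
  congr 1
  exact tprod_congr fun i => by ring

lemma qPI_ne_zero (hq : ‖q‖ < 1) {x : ℂ} (hx : ∀ i : ℕ, x * q ^ i ≠ 1) : qPI x q ≠ 0 := by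
  simp only [qPI, sub_eq_add_neg]
  refine tprod_one_add_ne_zero_of_summable (fun i => ?_) (by simpa using summable_norm_mul_pow hq x)
  rw [← sub_eq_add_neg, sub_ne_zero]
  exact (hx i).symm

lemma qPI_ne_zero_of_norm_lt_one (hq : ‖q‖ < 1) {x : ℂ} (hx : ‖x‖ < 1) : qPI x q ≠ 0 :=
  qPI_ne_zero hq fun i h => by simpa [h] using (norm_mul_pow_le hq.le x i).trans_lt hx

lemma continuousOn_qPI (hq : ‖q‖ < 1) (R : ℝ) :
    ContinuousOn (fun x => qPI x q) (Metric.closedBall 0 R) := by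
  have hprod := Summable.hasProdUniformlyOn_nat_one_add (f := fun i x => -(x * q ^ i))
    (isCompact_closedBall 0 R) (summable_norm_mul_pow hq R)
    (Eventually.of_forall fun i x hx => by
      rw [norm_neg, norm_mul, norm_mul]
      gcongr
      simpa using hx.trans (le_abs_self R))
    (fun i => by fun_prop)
  simp only [← sub_eq_add_neg] at hprod
  exact hprod.tendstoUniformlyOn_finsetRange.continuousOn
    (Frequently.of_forall fun n => by fun_prop)

lemma continuous_qPI (hq : ‖q‖ < 1) : Continuous (fun x => qPI x q) :=
  continuous_iff_continuousAt.mpr fun x =>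
    (continuousOn_qPI hq (‖x‖ + 1)).continuousAt
      (Metric.closedBall_mem_nhds_of_mem (by simp))

end qPochhammer

lemma qPI_mul_eq_of_functional_eq {a q : ℂ} (hq : ‖q‖ < 1) {P : ℂ → ℂ} (hP : ContinuousAt P 0)
    {S : Set ℂ} (hS : ∀ z ∈ S, q * z ∈ S)
    (hFE : ∀ z ∈ S, (1 - z) * P z = (1 - a * z) * P (q * z)) {z : ℂ} (hz : z ∈ S) :
    qPI z q * P z = qPI (a * z) q * P 0 := by
  have hmem : ∀ N : ℕ, q ^ N * z ∈ S := fun N => by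
    induction N with
    | zero => simpa using hz
    | succ N ih => simpa only [pow_succ', mul_assoc] using hS _ ih
  have hiter : ∀ N : ℕ, qPF z q N * P z = qPF (a * z) q N * P (q ^ N * z) := fun N => by
    induction N with
    | zero => simp [qPF]
    | succ N ih =>
      have hfe := hFE _ (hmem N)
      rw [show q * (q ^ N * z) = q ^ (N + 1) * z by ring] at hfe
      rw [qPF_succ, qPF_succ, mul_right_comm, ih]
      linear_combination qPF (a * z) q N * hfe
  have hlim : Tendsto (fun N : ℕ => qPF (a * z) q N * P (q ^ N * z)) atTop
      (𝓝 (qPI (a * z) q * P 0)) :=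
    (tendsto_qPF hq _).mul
      (hP.tendsto.comp (by simpa [mul_comm] using tendsto_mul_pow_nhds_zero hq z))
  exact tendsto_nhds_unique (((tendsto_qPF hq z).mul_const (P z)).congr hiter) hlim

lemma summable_norm_mul_of_tendsto {c f : ℕ → ℂ} {L : ℂ} (hc : Summable (‖c ·‖))
    (hf : Tendsto f atTop (𝓝 L)) : Summable (fun j => ‖c j * f j‖) := by
  have hbound : ∀ᶠ j in atTop, ‖f j‖ ≤ ‖L‖ + 1 :=
    hf.norm.eventually (eventually_le_nhds (lt_add_one ‖L‖))
  refine Summable.of_norm_bounded_eventually_nat (hc.mul_right (‖L‖ + 1)) ?_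
  filter_upwards [hbound] with j hj
  rw [norm_norm, norm_mul]
  gcongr

lemma summable_norm_of_recurrence {c : ℕ → ℂ} {a q : ℂ} (hq : ‖q‖ < 1) (ha : ‖a‖ < 1)
    (hrec : ∀ j, c (j + 1) * (q ^ (j + 1) - 1) = c j * (q ^ (j + 1) - a)) :
    Summable (‖c ·‖) := by
  set ratio : ℕ → ℂ := fun j => (q ^ (j + 1) - a) / (q ^ (j + 1) - 1)
  have hstep : ∀ j, c (j + 1) = c j * ratio j := fun j => by
    rw [mul_div_assoc', eq_div_iff (sub_ne_zero.mpr (pow_succ_ne_one hq j))]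
    exact hrec j
  have hlim : Tendsto ratio atTop (𝓝 ((0 - a) / (0 - 1))) := by
    have hpow : Tendsto (fun j : ℕ => q ^ (j + 1)) atTop (𝓝 0) :=
      (tendsto_pow_atTop_nhds_zero_of_norm_lt_one hq).comp (tendsto_add_atTop_nat 1)
    exact (hpow.sub_const a).div (hpow.sub_const 1) (by norm_num)
  have hr : (1 + ‖a‖) / 2 < 1 := by linarith
  have hev : ∀ᶠ j in atTop, ‖ratio j‖ ≤ (1 + ‖a‖) / 2 :=
    hlim.norm.eventually (eventually_le_nhds (by
      rw [zero_sub, zero_sub, neg_div_neg_eq, div_one]; linarith))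
  refine summable_of_ratio_norm_eventually_le hr ?_
  filter_upwards [hev] with j hj
  rw [norm_norm, norm_norm, hstep, norm_mul, mul_comm]
  exact mul_le_mul_of_nonneg_right hj (norm_nonneg _)

def qPoleSum (c : ℕ → ℂ) (q z : ℂ) : ℂ := ∑' j : ℕ, c j / (1 - z * q ^ j)

section qPoleSum

variable {c : ℕ → ℂ} {a q : ℂ}

lemma summable_div_one_sub_mul_pow (hq : ‖q‖ < 1) (hc : Summable (‖c ·‖)) (z : ℂ) :
    Summable (fun j => c j / (1 - z * q ^ j)) :=
  (summable_norm_mul_of_tendsto hc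
    ((tendsto_const_nhds.sub (tendsto_mul_pow_nhds_zero hq z)).inv₀ (by simp))).of_norm

lemma qPoleSum_eq_div_add (hq : ‖q‖ < 1) (hc : Summable (‖c ·‖)) (z : ℂ) :
    qPoleSum c q z = c 0 / (1 - z) + qPoleSum (fun j => c (j + 1)) q (q * z) := by
  rw [qPoleSum, (summable_div_one_sub_mul_pow hq hc z).tsum_eq_zero_add, qPoleSum]
  simp only [pow_zero, mul_one, pow_succ', mul_left_comm z q, mul_assoc]

lemma tsum_mul_div_one_sub_mul_pow (hq : ‖q‖ < 1) (hc : Summable (‖c ·‖)) {z : ℂ}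
    (hz : ∀ j : ℕ, z * q ^ j ≠ 1) :
    ∑' j, c j * (z * q ^ j / (1 - z * q ^ j)) = qPoleSum c q z - ∑' j, c j := by
  rw [qPoleSum, ← (summable_div_one_sub_mul_pow hq hc z).tsum_sub hc.of_norm]
  refine tsum_congr fun j => ?_
  field_simp [sub_ne_zero.mpr (hz j).symm]
  ring

lemma continuousAt_qPoleSum (hq : ‖q‖ ≤ 1) (hc : Summable (‖c ·‖)) {w : ℂ} (hw : ‖w‖ < 1) :
    ContinuousAt (qPoleSum c q) w := by
  set r := (1 + ‖w‖) / 2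
  have hwr : ‖w‖ < r := by simp only [r]; linarith
  have hr : r < 1 := by simp only [r]; linarith
  have hden : ∀ j : ℕ, ∀ x ∈ Metric.closedBall (0 : ℂ) r, 1 - r ≤ ‖1 - x * q ^ j‖ := by
    intro j x hx
    have hxq : ‖x * q ^ j‖ ≤ r := (norm_mul_pow_le hq x j).trans (mem_closedBall_zero_iff.mp hx)
    linarith [norm_sub_norm_le (1 : ℂ) (x * q ^ j), norm_one (α := ℂ)]
  have hcont : ContinuousOn (qPoleSum c q) (Metric.closedBall 0 r) := by
    refine continuousOn_tsum (u := fun j => ‖c j‖ / (1 - r)) (fun j => ?_) (hc.div_const _)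
      fun j x hx => ?_
    · exact continuousOn_const.div (by fun_prop) fun x hx =>
        norm_pos_iff.mp ((sub_pos.mpr hr).trans_le (hden j x hx))
    · rw [norm_div]
      exact div_le_div_of_nonneg_left (norm_nonneg _) (sub_pos.mpr hr) (hden j x hx)
  exact hcont.continuousAt (Metric.closedBall_mem_nhds_of_mem
    (mem_ball_zero_iff.mpr hwr))

variable (hq : ‖q‖ < 1) (hc : Summable (‖c ·‖))
  (hrec : ∀ j, c (j + 1) * (q ^ (j + 1) - 1) = c j * (q ^ (j + 1) - a))
include hq hc hrec

lemma qPoleSum_functional_eq {z : ℂ} (hz : ∀ j : ℕ, z * q ^ j ≠ 1) :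
    (1 - z) * qPoleSum c q z = (1 - a * z) * qPoleSum c q (q * z) := by
  have hden : ∀ j, 1 - z * q ^ j ≠ 0 := fun j => sub_ne_zero.mpr (hz j).symm
  set h : ℕ → ℂ := fun j => c j * ((z * q ^ j - z) / (1 - z * q ^ j))
  have hlim : Tendsto (fun j => (z * q ^ j - z) / (1 - z * q ^ j)) atTop
      (𝓝 ((0 - z) / (1 - 0))) :=
    ((tendsto_mul_pow_nhds_zero hq z).sub_const z).div
      (tendsto_const_nhds.sub (tendsto_mul_pow_nhds_zero hq z)) (by simp)
  have hh : Summable h := (summable_norm_mul_of_tendsto hc hlim).of_norm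
  have hc' : Summable c := hc.of_norm
  have hleft : ∀ j, (1 - z) * (c j / (1 - z * q ^ j)) = c j + h j := fun j => by
    simp only [h]
    field_simp [hden j]
    ring
  have hright : ∀ j, (1 - a * z) * (c j / (1 - q * z * q ^ j)) = c j + h (j + 1) := fun j => by
    have hzq : q * z * q ^ j = z * q ^ (j + 1) := by ring
    simp only [h, hzq]
    field_simp [hden (j + 1)]
    linear_combination (-z) * hrec j
  have h0 : h 0 = 0 := by simp [h]
  rw [qPoleSum, qPoleSum, ← tsum_mul_left, ← tsum_mul_left, tsum_congr hleft, tsum_congr hright,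
    hc'.tsum_add hh, hc'.tsum_add ((summable_nat_add_iff 1).mpr hh), hh.tsum_eq_zero_add, h0,
    zero_add]

lemma qPI_mul_qPoleSum {z : ℂ} (hz : ∀ j : ℕ, z * q ^ j ≠ 1) :
    qPI z q * qPoleSum c q z = qPI (a * z) q * ∑' j, c j := by
  have hS : ∀ w ∈ {w : ℂ | ∀ j : ℕ, w * q ^ j ≠ 1}, q * w ∈ {w : ℂ | ∀ j : ℕ, w * q ^ j ≠ 1} :=
    fun w hw j => by simpa only [pow_succ', mul_left_comm q w, mul_assoc] using hw (j + 1)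
  simpa [qPoleSum] using qPI_mul_eq_of_functional_eq hq
    (continuousAt_qPoleSum hq.le hc (by simp)) hS
    (fun w hw => qPoleSum_functional_eq hq hc hrec hw) hz

lemma qPI_mul_tsum : qPI a q * ∑' j, c j = qPI q q * c 0 := by
  set R : ℂ → ℂ := fun z =>
    qPI (z * q) q * (c 0 + (1 - z) * qPoleSum (fun j => c (j + 1)) q (q * z))
  have hR : ContinuousAt R 1 := by
    have hmul : ContinuousAt (fun z : ℂ => q * z) 1 := (continuous_const_mul q).continuousAt
    have hpole : ContinuousAt (fun z => qPoleSum (fun j => c (j + 1)) q (q * z)) 1 :=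
      ContinuousAt.comp (g := qPoleSum (fun j => c (j + 1)) q)
        (continuousAt_qPoleSum hq.le ((summable_nat_add_iff (f := (‖c ·‖)) 1).mpr hc)
          (by simpa using hq)) hmul
    have hqPI : ContinuousAt (fun z => qPI (z * q) q) 1 :=
      ContinuousAt.comp (g := fun x => qPI x q) (continuous_qPI hq).continuousAt
        (continuous_mul_const q).continuousAt
    exact hqPI.mul (continuousAt_const.add ((continuousAt_const.sub continuousAt_id).mul hpole))
  have hnear : ∀ᶠ z in 𝓝[≠] (1 : ℂ), ∀ j : ℕ, z * q ^ j ≠ 1 := by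
    have hsmall : ∀ᶠ z in 𝓝 (1 : ℂ), ‖q * z‖ < 1 :=
      (by fun_prop : Continuous fun z : ℂ => ‖q * z‖).continuousAt.eventually
        (gt_mem_nhds (by simpa using hq))
    filter_upwards [nhdsWithin_le_nhds hsmall, self_mem_nhdsWithin] with z hz hz1 j
    rcases j with _ | j
    · simpa using hz1
    · have hlt : ‖z * q ^ (j + 1)‖ < 1 := by
        rw [pow_succ', ← mul_assoc, mul_comm z q]
        exact (norm_mul_pow_le hq.le _ j).trans_lt hz
      exact fun h => by simp [h] at hlt
  have heq : ∀ᶠ z in 𝓝[≠] (1 : ℂ), qPI (a * z) q * ∑' j, c j = R z := by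
    filter_upwards [hnear, self_mem_nhdsWithin] with z hz hz1
    have hz1' : 1 - z ≠ 0 := sub_ne_zero.mpr (Ne.symm hz1)
    rw [← qPI_mul_qPoleSum hq hc hrec hz, qPoleSum_eq_div_add hq hc z, qPI_eq_one_sub_mul hq]
    simp only [R]
    field_simp
  have hlim : Tendsto (fun z => qPI (a * z) q * ∑' j, c j) (𝓝[≠] 1)
      (𝓝 (qPI a q * ∑' j, c j)) := by
    have := ((continuous_qPI hq).comp (continuous_const_mul a)).tendsto (1 : ℂ)
    simpa using (this.mul_const (∑' j, c j)).mono_left nhdsWithin_le_nhds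
  simpa [R] using tendsto_nhds_unique hlim
    ((hR.tendsto.mono_left nhdsWithin_le_nhds).congr' (EventuallyEq.symm heq))

end qPoleSum

def qMLCoeff (a q : ℂ) (j : ℕ) : ℂ := qPI (a * q ^ (-(j : ℤ))) q / qPF (q ^ (-(j : ℤ))) q j

lemma qMLCoeff_zero (a q : ℂ) : qMLCoeff a q 0 = qPI a q := by
  simp [qMLCoeff, qPF]

section qMLCoeff

variable {a q : ℂ}

lemma qPF_zpow_neg_succ (hq0 : q ≠ 0) (j : ℕ) :
    qPF (q ^ (-((j + 1 : ℕ) : ℤ))) q (j + 1) =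
      (1 - (q ^ (j + 1))⁻¹) * qPF (q ^ (-(j : ℤ))) q j := by
  rw [qPF, Finset.prod_range_succ', qPF, mul_comm]
  congr 1
  · simp only [pow_zero, mul_one, zpow_neg, zpow_natCast]
  · refine Finset.prod_congr rfl fun i _ => ?_
    simp only [zpow_neg, zpow_natCast]
    field_simp
    ring

lemma qMLCoeff_succ (hq : ‖q‖ < 1) (hq0 : q ≠ 0) (j : ℕ) :
    qMLCoeff a q (j + 1) * (q ^ (j + 1) - 1) = qMLCoeff a q j * (q ^ (j + 1) - a) := by
  have hne : q ^ (j + 1) - 1 ≠ 0 := sub_ne_zero.mpr (pow_succ_ne_one hq j)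
  have hpow : q ^ (j + 1) ≠ 0 := pow_ne_zero _ hq0
  have hshift : a * q ^ (-((j + 1 : ℕ) : ℤ)) * q = a * q ^ (-(j : ℤ)) := by
    simp only [zpow_neg, zpow_natCast, pow_succ]
    field_simp
  rw [qMLCoeff, qMLCoeff, qPF_zpow_neg_succ hq0, qPI_eq_one_sub_mul hq, hshift]
  simp only [zpow_neg, zpow_natCast]
  field_simp

lemma tsum_qMLCoeff (hq : ‖q‖ < 1) (hq0 : q ≠ 0) (ha : ‖a‖ < 1) :
    ∑' j, qMLCoeff a q j = qPI q q := by
  have h := qPI_mul_tsum hq (summable_norm_of_recurrence hq ha (qMLCoeff_succ hq hq0))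
    (qMLCoeff_succ hq hq0)
  rw [qMLCoeff_zero, mul_comm (qPI q q)] at h
  exact mul_left_cancel₀ (qPI_ne_zero_of_norm_lt_one hq ha) h

end qMLCoeff

/-- Mittag-Leffler expansion of `(az;q)_∞/(z;q)_∞` for `|a| < 1`, `|q - 1/2| < 1/10`,
valid at every `z` avoiding the poles `q^{-j}`, the series converging absolutely. -/
theorem qPochhammer_quotient_mittag_leffler
    (a q : ℂ) (ha : ‖a‖ < 1) (hq : ‖q - 1 / 2‖ < 1 / 10)
    (z : ℂ) (hz : ∀ j : ℕ, z * q ^ j ≠ 1) :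
    Summable (fun j : ℕ =>
      ‖(qPI (a * q ^ (-(j : ℤ))) q / qPF (q ^ (-(j : ℤ))) q j) *
        (z * q ^ j / (1 - z * q ^ j))‖) ∧
    qPI (a * z) q / qPI z q =
      1 + (1 / qPI q q) *
        ∑' j : ℕ, (qPI (a * q ^ (-(j : ℤ))) q / qPF (q ^ (-(j : ℤ))) q j) *
          (z * q ^ j / (1 - z * q ^ j)) := by
  have hq1 : ‖q‖ < 1 := by
    have := norm_add_le (q - 1 / 2) (1 / 2)
    norm_num at this ⊢
    linarith
  have hq0 : q ≠ 0 := by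
    rintro rfl
    norm_num at hq
  have hrec := qMLCoeff_succ (a := a) hq1 hq0
  have hc := summable_norm_of_recurrence hq1 ha hrec
  have hlim : Tendsto (fun j => z * q ^ j / (1 - z * q ^ j)) atTop (𝓝 (0 / (1 - 0))) :=
    (tendsto_mul_pow_nhds_zero hq1 z).div
      (tendsto_const_nhds.sub (tendsto_mul_pow_nhds_zero hq1 z)) (by simp)
  refine ⟨summable_norm_mul_of_tendsto hc hlim, ?_⟩
  have hML := qPI_mul_qPoleSum hq1 hc hrec hz
  rw [tsum_qMLCoeff hq1 hq0 ha] at hML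
  change _ = 1 + 1 / qPI q q * ∑' j, qMLCoeff a q j * _
  rw [tsum_mul_div_one_sub_mul_pow hq1 hc hz, tsum_qMLCoeff hq1 hq0 ha]
  have hzq := qPI_ne_zero hq1 hz
  have hqq := qPI_ne_zero_of_norm_lt_one hq1 hq1
  field_simp
  linear_combination -hML
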